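/- Let 𝒪 be an order ideal in P = K[x_0,…,x_n], fix a labeling of ∂𝒪 ordered increasingly by degree, and let G be a homogeneous ∂𝒪-prebasis. Then P = ⟨𝒯G⟩ ⊕ ⟨𝒪⟩ as K-vector spaces, and for every d ≥ 0 one has P_d = ⟨𝒯G_d⟩ ⊕ ⟨𝒪_d⟩. -/

import Mathlib

open MvPolynomial

namespace Border

/-- A term of `K[x_0, …, x_n]`, identified with its exponent vector. -/
abbrev Term (n : ℕ) := Fin (n + 1) →₀ ℕ

variable {n : ℕ}

/-- The (standard) degree of a term. -/
def tdeg (m : Term n) : ℕ := ∑ i, m i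

/-- An order ideal: a nonempty set of terms closed under divisors. -/
def IsOrderIdeal (O : Set (Term n)) : Prop :=
  O.Nonempty ∧ ∀ τ ∈ O, ∀ τ' : Term n, τ' ≤ τ → τ' ∈ O

/-- The border `∂𝒪 = (x_0·𝒪 ∪ ⋯ ∪ x_n·𝒪) ∖ 𝒪`. -/
def border (O : Set (Term n)) : Set (Term n) :=
  {σ | σ ∉ O ∧ ∃ r : Fin (n + 1), ∃ τ ∈ O, σ = τ + Finsupp.single r 1}

/-- Multiplicative set of a border term `σ`, with respect to a labeling `lab` of the border:
`𝒯_σ = {η : σ' ∤ η·σ for every border term σ' with a larger label}`. -/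
def mulSet (O : Set (Term n)) (lab : Term n → ℕ) (σ : Term n) : Set (Term n) :=
  {η | ∀ σ' ∈ border O, lab σ < lab σ' → ¬ σ' ≤ η + σ}

/-- The cone `C(σ) = {η·σ : η ∈ 𝒯_σ}`. -/
def cone (O : Set (Term n)) (lab : Term n → ℕ) (σ : Term n) : Set (Term n) :=
  (fun η => η + σ) '' mulSet O lab σ

/-- A labeling of the border which is injective and ordered increasingly by degree. -/
def DegOrderedLabeling (O : Set (Term n)) (lab : Term n → ℕ) : Prop :=
  Set.InjOn lab (border O) ∧
    ∀ σ ∈ border O, ∀ σ' ∈ border O, lab σ < lab σ' → tdeg σ ≤ tdeg σ'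

/-- Iterated border closures: `∂⁰𝒪 := 𝒪`, and the `(k+1)`-st closure adds the border. -/
def borderClosure (O : Set (Term n)) : ℕ → Set (Term n)
  | 0 => O
  | k + 1 => borderClosure O k ∪ border (borderClosure O k)

/-- The index `ind_𝒪(τ)`: the least `k` with `τ ∈ ∂^k𝒪`. -/
noncomputable def ind (O : Set (Term n)) (τ : Term n) : ℕ :=
  sInf {k | τ ∈ borderClosure O k}

/-- Degree-`d` part of a set of terms. -/
def Od (O : Set (Term n)) (d : ℕ) : Set (Term n) := {τ | τ ∈ O ∧ tdeg τ = d}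

variable {K : Type*} [Field K]

/-- The index of a nonzero polynomial: the maximal index of a term of its support. -/
noncomputable def indP (O : Set (Term n)) (f : MvPolynomial (Fin (n + 1)) K) : ℕ :=
  f.support.sup (ind O)

/-- A homogeneous `∂𝒪`-prebasis: a family `g σ = σ - Σ_{τ ∈ 𝒪_{deg σ}} c_{στ} τ`. -/
def IsPrebasis (O : Set (Term n)) (g : Term n → MvPolynomial (Fin (n + 1)) K) : Prop :=
  ∀ σ ∈ border O, ∀ τ ∈ (monomial σ (1 : K) - g σ).support, τ ∈ O ∧ tdeg τ = tdeg σ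

/-- The set of border reductors `𝒯G = {η·g_σ : σ ∈ ∂𝒪, η ∈ 𝒯_σ}`. -/
def reductors (O : Set (Term n)) (lab : Term n → ℕ)
    (g : Term n → MvPolynomial (Fin (n + 1)) K) : Set (MvPolynomial (Fin (n + 1)) K) :=
  {p | ∃ σ ∈ border O, ∃ η ∈ mulSet O lab σ, p = monomial η (1 : K) * g σ}

/-- The degree-`d` border reductors `𝒯G_d = 𝒯G ∩ P_d`. -/
def reductorsDeg (O : Set (Term n)) (lab : Term n → ℕ)
    (g : Term n → MvPolynomial (Fin (n + 1)) K) (d : ℕ) :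
    Set (MvPolynomial (Fin (n + 1)) K) :=
  reductors O lab g ∩ {p | p.IsHomogeneous d}

/-- One step of the border reduction relation `→_G`. -/
def Step (O : Set (Term n)) (lab : Term n → ℕ)
    (g : Term n → MvPolynomial (Fin (n + 1)) K)
    (f h : MvPolynomial (Fin (n + 1)) K) : Prop :=
  ∃ σ ∈ border O, ∃ η ∈ mulSet O lab σ, η + σ ∈ f.support ∧
    h = f - f.coeff (η + σ) • (monomial η (1 : K) * g σ)

/-- The border reduction relation `→⁺_G` (finitely many, possibly zero, steps). -/
def Reduces (O : Set (Term n)) (lab : Term n → ℕ)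
    (g : Term n → MvPolynomial (Fin (n + 1)) K) :
    MvPolynomial (Fin (n + 1)) K → MvPolynomial (Fin (n + 1)) K → Prop :=
  Relation.ReflTransGen (Step O lab g)

/-- The `K`-vector space spanned by a set of terms. -/
noncomputable def spanTerms (K : Type*) [Field K] (S : Set (Term n)) :
    Submodule K (MvPolynomial (Fin (n + 1)) K) :=
  Submodule.span K ((fun τ => monomial τ (1 : K)) '' S)

/-- The ideal `(G)` generated by a `∂𝒪`-prebasis. -/
noncomputable def idealG (O : Set (Term n)) (g : Term n → MvPolynomial (Fin (n + 1)) K) :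
    Ideal (MvPolynomial (Fin (n + 1)) K) :=
  Ideal.span (g '' border O)

/-- The degree-`d` part `I_d` of an ideal, as a `K`-vector subspace. -/
noncomputable def degPart (I : Ideal (MvPolynomial (Fin (n + 1)) K)) (d : ℕ) :
    Submodule K (MvPolynomial (Fin (n + 1)) K) :=
  Submodule.restrictScalars K I ⊓ homogeneousSubmodule (Fin (n + 1)) K d

/-- Homogeneous ideal. -/
def IsHomogeneousIdeal (I : Ideal (MvPolynomial (Fin (n + 1)) K)) : Prop :=
  ∀ f ∈ I, ∀ d : ℕ, homogeneousComponent d f ∈ I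

/-- `G` is a homogeneous `∂𝒪`-basis of `J`: it is a prebasis contained in `J` and for every
`d` one has `P_d = J_d ⊕ ⟨𝒪_d⟩`, i.e. the residue classes of `𝒪_d` are a basis of `P_d/J_d`. -/
def IsBorderBasisOf (O : Set (Term n)) (g : Term n → MvPolynomial (Fin (n + 1)) K)
    (J : Ideal (MvPolynomial (Fin (n + 1)) K)) : Prop :=
  IsPrebasis O g ∧ (∀ σ ∈ border O, g σ ∈ J) ∧
    ∀ d : ℕ, degPart J d ⊔ spanTerms K (Od O d) = homogeneousSubmodule (Fin (n + 1)) K d ∧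
      Disjoint (degPart J d) (spanTerms K (Od O d))

/-- An `m`-lower representation of `f` by `𝒯G`: `f = Σ c_j • η_j·g_{σ_j}` with distinct
pairs `(η_j, σ_j)`, `η_j ∈ 𝒯_{σ_j}` and `ind(η_j σ_j) ≤ m`. -/
def HasLRep (O : Set (Term n)) (lab : Term n → ℕ)
    (g : Term n → MvPolynomial (Fin (n + 1)) K)
    (f : MvPolynomial (Fin (n + 1)) K) (m : ℕ) : Prop :=
  ∃ (s : Finset (Term n × Term n)) (c : Term n × Term n → K),
    (∀ p ∈ s, p.2 ∈ border O ∧ p.1 ∈ mulSet O lab p.2 ∧ ind O (p.1 + p.2) ≤ m) ∧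
    f = ∑ p ∈ s, c p • (monomial p.1 (1 : K) * g p.2)

/-- An `m`-lower representation of `f` by `𝒯G_d`. -/
def HasLRepDeg (O : Set (Term n)) (lab : Term n → ℕ)
    (g : Term n → MvPolynomial (Fin (n + 1)) K)
    (f : MvPolynomial (Fin (n + 1)) K) (m d : ℕ) : Prop :=
  ∃ (s : Finset (Term n × Term n)) (c : Term n × Term n → K),
    (∀ p ∈ s, p.2 ∈ border O ∧ p.1 ∈ mulSet O lab p.2 ∧ ind O (p.1 + p.2) ≤ m ∧
      (monomial p.1 (1 : K) * g p.2).IsHomogeneous d) ∧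
    f = ∑ p ∈ s, c p • (monomial p.1 (1 : K) * g p.2)

/-- The subtype of terms of `𝒪` of degree `d`. -/
abbrev OdSub (O : Set (Term n)) (d : ℕ) : Type _ := {τ : Term n // τ ∈ Od O d}

lemma tdeg_component_lt {d : ℕ} (m : Term n) (h : tdeg m = d) (i : Fin (n + 1)) :
    m i < d + 1 := by
  have : m i ≤ tdeg m :=
    Finset.single_le_sum (f := fun j => m j) (fun j _ => Nat.zero_le _) (Finset.mem_univ i)
  omega

instance (O : Set (Term n)) (d : ℕ) : Finite (OdSub O d) := by
  have hinj : Function.Injective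
      (fun τ : OdSub O d => fun i : Fin (n + 1) =>
        (⟨τ.1 i, tdeg_component_lt τ.1 τ.2.2 i⟩ : Fin (d + 1))) := by
    intro a b hab
    apply Subtype.ext
    apply Finsupp.ext
    intro i
    simpa using congrArg Fin.val (congrFun hab i)
  exact Finite.of_injective _ hinj

noncomputable instance (O : Set (Term n)) (d : ℕ) : Fintype (OdSub O d) :=
  Fintype.ofFinite _

open scoped Classical in
/-- The `r`-th `d`-graded formal multiplication matrix of a prebasis `G`,
with rows indexed by `𝒪_{d+1}` and columns by `𝒪_d`. -/
noncomputable def multMatrix (O : Set (Term n))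
    (g : Term n → MvPolynomial (Fin (n + 1)) K) (r : Fin (n + 1)) (d : ℕ) :
    Matrix (OdSub O (d + 1)) (OdSub O d) K :=
  Matrix.of fun τ' τ =>
    if τ.1 + Finsupp.single r 1 ∈ O then
      (if τ.1 + Finsupp.single r 1 = τ'.1 then 1 else 0)
    else (monomial (τ.1 + Finsupp.single r 1) (1 : K)
            - g (τ.1 + Finsupp.single r 1)).coeff τ'.1

/-- The minimum degree of a border term. -/
noncomputable def minDegBorder (O : Set (Term n)) : ℕ := sInf (tdeg '' border O)

/-- The `d`-th Macaulay transformation `a^{⟨d⟩}`, computed greedily. -/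
noncomputable def macaulay : ℕ → ℕ → ℕ
  | 0, _ => 0
  | d + 1, a =>
    if a = 0 then 0
    else
      Nat.choose (sSup {k | Nat.choose k (d + 1) ≤ a} + 1) (d + 2) +
        macaulay d (a - Nat.choose (sSup {k | Nat.choose k (d + 1) ≤ a}) (d + 1))

/-- An ideal is generated in degrees `≤ m` if it is generated by its homogeneous
elements of degree `≤ m`. -/
def GeneratedInDegLE (I : Ideal (MvPolynomial (Fin (n + 1)) K)) (m : ℕ) : Prop :=
  I = Ideal.span {f | f ∈ I ∧ ∃ d ≤ m, f.IsHomogeneous d}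

/-!
Every term `μ ∉ 𝒪` factors uniquely as `μ = η·σ` with `σ ∈ ∂𝒪` and `η ∈ 𝒯_σ`: take for `σ` the
border divisor of `μ` with the largest label. Put `b_μ = μ` for `μ ∈ 𝒪` and `b_μ = η·g_σ`
otherwise, so that `𝒯G = {b_μ : μ ∉ 𝒪}`. The other terms of `η·g_σ` are `η·τ` with
`τ ∈ 𝒪_{deg σ}`: they have the degree of `μ` and are strictly closer to `𝒪` than `μ`, because the
degree-ordered labeling makes `deg σ` maximal among the border divisors of `μ`. Hence `(b_μ)` is
unitriangular with respect to the distance to `𝒪`, so it is a basis of `P` whose members of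
degree `d` span `P_d`, and both decompositions split this basis along `𝕋 = (𝕋 ∖ 𝒪) ⊔ 𝒪`.
-/

end Border

namespace MvPolynomial

variable {R ι : Type*} [CommRing R] {b : (ι →₀ ℕ) → MvPolynomial ι R} {w : (ι →₀ ℕ) → ℕ}

theorem linearIndependent_of_unitriangular
    (hb : ∀ μ, ∀ ν ∈ (b μ - monomial μ 1).support, w ν < w μ) : LinearIndependent R b := by
  classical
  have hcoeff : ∀ μ ν, w μ ≤ w ν → (b μ).coeff ν = if μ = ν then 1 else 0 := by
    intro μ ν hle
    have hν : ν ∉ (b μ - monomial μ 1).support := fun h => (hb μ ν h).not_ge hle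
    rwa [mem_support_iff, not_not, coeff_sub, coeff_monomial, sub_eq_zero] at hν
  rw [linearIndependent_iff']
  intro s c hsum i hi
  by_contra hci
  obtain ⟨μ, hμ, hmax⟩ := (s.filter (c · ≠ 0)).exists_max_image w ⟨i, by simp [hi, hci]⟩
  rw [Finset.mem_filter] at hμ
  have hsum_coeff : (∑ j ∈ s, c j • b j).coeff μ = c μ := by
    rw [coeff_sum, Finset.sum_eq_single_of_mem μ hμ.1]
    · simp [hcoeff μ μ le_rfl]
    · intro j hj hjμ
      by_cases hcj : c j = 0
      · simp [hcj]
      · simp [hcoeff j μ (hmax j (by simp [hj, hcj])), hjμ]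
  exact hμ.2 (hsum_coeff.symm.trans (by rw [hsum, coeff_zero]))

theorem span_image_eq_restrictSupport_of_unitriangular {S : Set (ι →₀ ℕ)}
    (hb : ∀ μ ∈ S, ∀ ν ∈ (b μ - monomial μ 1).support, ν ∈ S ∧ w ν < w μ) :
    Submodule.span R (b '' S) = restrictSupport R S := by
  apply le_antisymm
  · rw [Submodule.span_le, Set.image_subset_iff]
    intro μ hμ
    rw [Set.mem_preimage, SetLike.mem_coe, ← sub_add_cancel (b μ) (monomial μ 1)]
    exact Submodule.add_mem _ (fun ν hν => (hb μ hμ ν hν).1) (by simp [hμ])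
  · rw [restrictSupport_eq_span, Submodule.span_le, Set.image_subset_iff]
    intro μ hμ
    induction hw : w μ using Nat.strong_induction_on generalizing μ with
    | _ k ih =>
      have hlower : b μ - monomial μ 1 ∈ Submodule.span R (b '' S) := by
        have : b μ - monomial μ 1 ∈ restrictSupport R {ν | ν ∈ S ∧ w ν < w μ} :=
          fun ν hν => hb μ hμ ν hν
        rw [restrictSupport_eq_span] at this
        refine Submodule.span_le.2 ?_ this
        rintro _ ⟨ν, ⟨hνS, hνw⟩, rfl⟩
        exact ih (w ν) (hw ▸ hνw) hνS rfl
      have hbμ : b μ ∈ Submodule.span R (b '' S) := Submodule.subset_span ⟨μ, hμ, rfl⟩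
      simpa using Submodule.sub_mem _ hbμ hlower

lemma exists_eq_add_of_mem_support_monomial_mul_sub {η σ ν : ι →₀ ℕ} {p : MvPolynomial ι R}
    (hν : ν ∈ (monomial η 1 * p - monomial (η + σ) 1).support) :
    ∃ τ ∈ (monomial σ 1 - p).support, ν = η + τ := by
  classical
  have hneg : monomial η 1 * p - monomial (η + σ) 1 = -(monomial η 1 * (monomial σ 1 - p)) := by
    rw [mul_sub, monomial_mul, one_mul]
    ring
  rw [hneg, support_neg, mem_support_iff, coeff_monomial_mul'] at hν
  split_ifs at hν with hle
  · refine ⟨ν - η, mem_support_iff.2 (by simpa using hν), ?_⟩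
    rw [add_tsub_cancel_of_le hle]
  · exact absurd rfl hν

end MvPolynomial

namespace Border

variable {n : ℕ} {K : Type*} [Field K]

lemma tdeg_eq_degree (m : Term n) : tdeg m = m.degree := by
  rw [tdeg, Finsupp.degree_eq_sum]

lemma tdeg_add (a b : Term n) : tdeg (a + b) = tdeg a + tdeg b := by
  simp only [tdeg_eq_degree, map_add]

lemma tdeg_single (r : Fin (n + 1)) : tdeg (Finsupp.single r 1 : Term n) = 1 := by
  rw [tdeg_eq_degree, Finsupp.degree_single]

lemma homogeneousSubmodule_eq_restrictSupport (R : Type*) [CommSemiring R] (d : ℕ) :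
    homogeneousSubmodule (Fin (n + 1)) R d = restrictSupport R (tdeg ⁻¹' {d}) := by
  rw [homogeneousSubmodule_eq_finsupp_supported]
  congr 1
  ext m
  simp [tdeg_eq_degree]

/-- For an order ideal this is the index `ind O μ`, in its characterisation as the least degree
of a cofactor `η` with `μ = η·τ`, `τ ∈ 𝒪`. -/
noncomputable def orderDist (O : Set (Term n)) (μ : Term n) : ℕ :=
  sInf {k | ∃ η, ∃ τ ∈ O, η + τ = μ ∧ tdeg η = k}

lemma orderDist_add_le {O : Set (Term n)} {τ : Term n} (hτ : τ ∈ O) (η : Term n) :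
    orderDist O (η + τ) ≤ tdeg η :=
  Nat.sInf_le ⟨η, τ, hτ, rfl, rfl⟩

lemma IsOrderIdeal.zero_mem {O : Set (Term n)} (hO : IsOrderIdeal O) : (0 : Term n) ∈ O := by
  obtain ⟨τ, hτ⟩ := hO.1
  exact hO.2 τ hτ 0 zero_le

lemma IsOrderIdeal.add_notMem_of_mem_border {O : Set (Term n)} (hO : IsOrderIdeal O)
    {σ : Term n} (hσ : σ ∈ border O) (η : Term n) : η + σ ∉ O :=
  fun h => hσ.1 (hO.2 _ h σ le_add_self)

lemma exists_mem_border_le {O : Set (Term n)} (hO : IsOrderIdeal O) {μ : Term n} (hμ : μ ∉ O) :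
    ∃ σ ∈ border O, σ ≤ μ ∧ tdeg μ + 1 = tdeg σ + orderDist O μ := by
  obtain ⟨η, τ, hτ, rfl, hdist⟩ : ∃ η, ∃ τ ∈ O, η + τ = μ ∧ tdeg η = orderDist O μ :=
    Nat.sInf_mem (s := {k | ∃ η, ∃ τ ∈ O, η + τ = μ ∧ tdeg η = k})
      ⟨tdeg μ, μ, 0, hO.zero_mem, add_zero μ, rfl⟩
  obtain ⟨r, hr⟩ : ∃ r, η r ≠ 0 := by
    by_contra! h
    exact hμ (by rwa [show η = 0 from Finsupp.ext h, zero_add])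
  obtain ⟨η', rfl⟩ : ∃ η', η = η' + Finsupp.single r 1 :=
    ⟨η - Finsupp.single r 1, (tsub_add_cancel_of_le (Finsupp.single_le_iff.2 (by omega))).symm⟩
  have hsplit : η' + Finsupp.single r 1 + τ = η' + (τ + Finsupp.single r 1) := by abel
  have hdeg : tdeg (η' + Finsupp.single r 1) = tdeg η' + 1 := by rw [tdeg_add, tdeg_single]
  refine ⟨τ + Finsupp.single r 1, ⟨fun hmem => ?_, r, τ, hτ, rfl⟩, ?_, ?_⟩
  · have := orderDist_add_le hmem η'
    rw [← hsplit] at this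
    omega
  · rw [hsplit]
    exact le_add_self
  · rw [← hdist, tdeg_add, hdeg, tdeg_add, tdeg_single]
    omega

lemma exists_mem_mulSet_add_eq {O : Set (Term n)} (lab : Term n → ℕ) {σ₀ μ : Term n}
    (hσ₀ : σ₀ ∈ border O) (hle : σ₀ ≤ μ) :
    ∃ σ ∈ border O, ∃ η ∈ mulSet O lab σ, η + σ = μ := by
  have hfin : {σ | σ ∈ border O ∧ σ ≤ μ}.Finite := (Set.finite_Iic μ).subset fun _ h => h.2
  obtain ⟨σ, ⟨hσ, hσμ⟩, hmax⟩ := hfin.exists_maximalFor lab _ ⟨σ₀, hσ₀, hle⟩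
  refine ⟨σ, hσ, μ - σ, fun σ' hσ' hlt hle' => ?_, tsub_add_cancel_of_le hσμ⟩
  rw [tsub_add_cancel_of_le hσμ] at hle'
  exact hlt.not_ge (hmax ⟨hσ', hle'⟩ hlt.le)

lemma eq_of_add_eq_of_mem_mulSet {O : Set (Term n)} {lab : Term n → ℕ}
    (hlab : Set.InjOn lab (border O)) {σ σ' η η' : Term n}
    (hσ : σ ∈ border O) (hη : η ∈ mulSet O lab σ)
    (hσ' : σ' ∈ border O) (hη' : η' ∈ mulSet O lab σ')
    (heq : η + σ = η' + σ') : σ = σ' ∧ η = η' := by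
  have hge : ¬ lab σ < lab σ' := fun hlt => hη σ' hσ' hlt (heq ▸ le_add_self)
  have hle : ¬ lab σ' < lab σ := fun hlt => hη' σ hσ hlt (heq ▸ le_add_self)
  obtain rfl : σ = σ' := hlab hσ hσ' (by omega)
  exact ⟨rfl, add_right_cancel heq⟩

lemma tdeg_le_of_le_add {O : Set (Term n)} {lab : Term n → ℕ}
    (hlab : DegOrderedLabeling O lab) {σ σ' η : Term n}
    (hσ : σ ∈ border O) (hη : η ∈ mulSet O lab σ) (hσ' : σ' ∈ border O) (hle : σ' ≤ η + σ) :
    tdeg σ' ≤ tdeg σ := by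
  rcases lt_trichotomy (lab σ') (lab σ) with hlt | heq | hgt
  · exact hlab.2 σ' hσ' σ hσ hlt
  · rw [hlab.1 hσ' hσ heq]
  · exact absurd hle (hη σ' hσ' hgt)

lemma tdeg_lt_orderDist {O : Set (Term n)} (hO : IsOrderIdeal O) {lab : Term n → ℕ}
    (hlab : DegOrderedLabeling O lab) {σ η : Term n}
    (hσ : σ ∈ border O) (hη : η ∈ mulSet O lab σ) :
    tdeg η < orderDist O (η + σ) := by
  obtain ⟨σ', hσ', hle, hdist⟩ := exists_mem_border_le hO (hO.add_notMem_of_mem_border hσ η)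
  have := tdeg_le_of_le_add hlab hσ hη hσ' hle
  rw [tdeg_add] at hdist
  omega

lemma IsPrebasis.mem_support_monomial_mul_sub {O : Set (Term n)} (hO : IsOrderIdeal O)
    {lab : Term n → ℕ} (hlab : DegOrderedLabeling O lab)
    {g : Term n → MvPolynomial (Fin (n + 1)) K} (hg : IsPrebasis O g)
    {σ η ν : Term n} (hσ : σ ∈ border O) (hη : η ∈ mulSet O lab σ)
    (hν : ν ∈ (monomial η 1 * g σ - monomial (η + σ) 1).support) :
    tdeg ν = tdeg (η + σ) ∧ orderDist O ν < orderDist O (η + σ) := by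
  obtain ⟨τ, hτ, rfl⟩ := exists_eq_add_of_mem_support_monomial_mul_sub hν
  obtain ⟨hτO, hτdeg⟩ := hg σ hσ τ hτ
  refine ⟨by rw [tdeg_add, tdeg_add, hτdeg], ?_⟩
  exact (orderDist_add_le hτO η).trans_lt (tdeg_lt_orderDist hO hlab hσ hη)

theorem exists_unitriangular_family {O : Set (Term n)} (hO : IsOrderIdeal O)
    {lab : Term n → ℕ} (hlab : DegOrderedLabeling O lab)
    {g : Term n → MvPolynomial (Fin (n + 1)) K} (hg : IsPrebasis O g) :
    ∃ b : Term n → MvPolynomial (Fin (n + 1)) K,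
      (∀ μ, ∀ ν ∈ (b μ - monomial μ 1).support,
        tdeg ν = tdeg μ ∧ orderDist O ν < orderDist O μ) ∧
      (∀ μ ∈ O, b μ = monomial μ 1) ∧ b '' Oᶜ = reductors O lab g := by
  classical
  have hdecomp : ∀ μ ∉ O, ∃ p : Term n × Term n,
      p.2 ∈ border O ∧ p.1 ∈ mulSet O lab p.2 ∧ p.1 + p.2 = μ := by
    intro μ hμ
    obtain ⟨σ₀, hσ₀, hle, -⟩ := exists_mem_border_le hO hμ
    obtain ⟨σ, hσ, η, hη, rfl⟩ := exists_mem_mulSet_add_eq lab hσ₀ hle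
    exact ⟨(η, σ), hσ, hη, rfl⟩
  choose! p hp using hdecomp
  refine ⟨fun μ => if μ ∈ O then monomial μ 1 else monomial (p μ).1 1 * g (p μ).2,
    fun μ ν hν => ?_, fun μ hμ => if_pos hμ, ?_⟩
  · by_cases hμ : μ ∈ O
    · simp [hμ] at hν
    obtain ⟨hσ, hη, hsum⟩ := hp μ hμ
    simp only [if_neg hμ] at hν
    generalize p μ = q at hσ hη hsum hν
    subst hsum
    exact hg.mem_support_monomial_mul_sub hO hlab hσ hη hν
  · ext q
    constructor
    · rintro ⟨μ, hμ, rfl⟩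
      obtain ⟨hσ, hη, -⟩ := hp μ hμ
      exact ⟨_, hσ, _, hη, if_neg hμ⟩
    · rintro ⟨σ, hσ, η, hη, rfl⟩
      have hμ := hO.add_notMem_of_mem_border hσ η
      obtain ⟨hσ', hη', hsum⟩ := hp (η + σ) hμ
      obtain ⟨hσσ', hηη'⟩ := eq_of_add_eq_of_mem_mulSet hlab.1 hσ' hη' hσ hη hsum
      exact ⟨η + σ, hμ, by simp only [if_neg hμ, hσσ', hηη']⟩

theorem span_reductorsDeg_sup_spanTerms_eq {O : Set (Term n)} {lab : Term n → ℕ}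
    {g b : Term n → MvPolynomial (Fin (n + 1)) K} (hbO : ∀ μ ∈ O, b μ = monomial μ 1)
    (hbred : b '' Oᶜ = reductors O lab g) {d : ℕ}
    (hdeg : Submodule.span K (b '' (tdeg ⁻¹' {d})) = homogeneousSubmodule (Fin (n + 1)) K d) :
    Submodule.span K (reductorsDeg O lab g d) ⊔ spanTerms K (Od O d) =
      homogeneousSubmodule (Fin (n + 1)) K d := by
  apply le_antisymm
  · refine sup_le (Submodule.span_le.2 fun p hp => hp.2) ?_
    rw [homogeneousSubmodule_eq_restrictSupport, spanTerms, ← restrictSupport_eq_span]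
    exact restrictSupport_mono K fun τ (hτ : τ ∈ Od O d) => hτ.2
  · have hOd : b '' (tdeg ⁻¹' {d} ∩ O) = (monomial · 1) '' Od O d := by
      rw [Set.inter_comm]
      exact Set.image_congr fun μ hμ => hbO μ hμ.1
    rw [← hdeg, ← Set.sdiff_union_inter (tdeg ⁻¹' {d}) O, Set.image_union, Submodule.span_union,
      hOd]
    refine sup_le_sup_right (Submodule.span_mono ?_) _
    rintro _ ⟨μ, ⟨hμd, hμO⟩, rfl⟩
    refine ⟨hbred ▸ ⟨μ, hμO, rfl⟩, (mem_homogeneousSubmodule d (b μ)).1 ?_⟩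
    exact hdeg ▸ Submodule.subset_span ⟨μ, hμd, rfl⟩

/-- **Direct sum decomposition.** `P = ⟨𝒯G⟩ ⊕ ⟨𝒪⟩`, and `P_d = ⟨𝒯G_d⟩ ⊕ ⟨𝒪_d⟩` for every `d`. -/
theorem span_reductors_isCompl (O : Set (Term n)) (hO : IsOrderIdeal O)
    (lab : Term n → ℕ) (hlab : DegOrderedLabeling O lab)
    (g : Term n → MvPolynomial (Fin (n + 1)) K) (hg : IsPrebasis O g) :
    IsCompl (Submodule.span K (reductors O lab g)) (spanTerms K O) ∧
    ∀ d : ℕ,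
      Submodule.span K (reductorsDeg O lab g d) ⊔ spanTerms K (Od O d) =
        homogeneousSubmodule (Fin (n + 1)) K d ∧
      Disjoint (Submodule.span K (reductorsDeg O lab g d)) (spanTerms K (Od O d)) := by
  obtain ⟨b, hb, hbO, hbred⟩ := exists_unitriangular_family hO hlab hg
  have hli : LinearIndependent K b := linearIndependent_of_unitriangular fun μ ν hν => (hb μ ν hν).2
  have hspan (D : Set ℕ) :
      Submodule.span K (b '' (tdeg ⁻¹' D)) = restrictSupport K (tdeg ⁻¹' D) :=
    span_image_eq_restrictSupport_of_unitriangular fun μ hμ ν hν =>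
      ⟨Set.mem_preimage.2 ((hb μ ν hν).1 ▸ hμ), (hb μ ν hν).2⟩
  have hcompl : IsCompl (Submodule.span K (reductors O lab g)) (spanTerms K O) := by
    rw [← hbred, spanTerms, ← Set.image_congr hbO]
    exact hli.isCompl_span_image (by simpa [← Set.image_univ] using hspan Set.univ)
      isCompl_compl.symm
  refine ⟨hcompl, fun d => ⟨?_, ?_⟩⟩
  · exact span_reductorsDeg_sup_spanTerms_eq hbO hbred
      (by rw [hspan, homogeneousSubmodule_eq_restrictSupport])
  · exact hcompl.disjoint.mono (Submodule.span_mono Set.inter_subset_left)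
      (Submodule.span_mono (Set.image_mono fun _ h => h.1))

end Border
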